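/- If S clients are sampled uniformly with replacement from {1,…,N} as i₁,…,i_S, each with an independent ω-compression operator Cⱼ, then g = (1/S)∑ⱼ Cⱼ(∇f_{iⱼ}(x) − h_{iⱼ}) + h satisfies E[‖g − ∇f(x)‖²] ≤ ((1+ω)/S)·(1/N)∑ᵢ₌₁^N ‖∇fᵢ(x) − hᵢ‖². -/

import Mathlib

/-!
Write `a i = ∇fᵢ(x) - hᵢ` and `ā` for their mean, so that `∇f(x) = ā + h` and the error of the
estimator is `S⁻¹ (∑ⱼ Cⱼ(a (iⱼ)) - S ā)`. Sampling with replacement is integration against the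
product of uniform measures. For independent square-integrable vectors `Yⱼ` with means `mⱼ`,
`E‖∑ⱼ Yⱼ - z‖² = ∑ⱼ E‖Yⱼ - mⱼ‖² + ‖∑ⱼ mⱼ - z‖²`, because the cross terms of the centred parts
vanish by independence. Applied to the compressors with the indices fixed, this bounds the inner
expectation by `w ∑ⱼ ‖a (iⱼ)‖² + ‖∑ⱼ a (iⱼ) - S ā‖²`; applied once more to the sampled indices, the
second term averages to `S` times the variance of `a`, which is at most its second moment.
-/

open MeasureTheory ProbabilityTheory RealInnerProductSpace

section

variable {E : Type*} [NormedAddCommGroup E] [InnerProductSpace ℝ E]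

theorem MeasureTheory.MemLp.integrable_inner {Ω : Type*} [MeasurableSpace Ω] {μ : Measure Ω}
    {X Y : Ω → E} (hX : MemLp X 2 μ) (hY : MemLp Y 2 μ) : Integrable (fun ω => ⟪X ω, Y ω⟫) μ :=
  (L2.integrable_inner (hX.toLp X) (hY.toLp Y)).congr <| by
    filter_upwards [hX.coeFn_toLp, hY.coeFn_toLp] with ω hXω hYω
    rw [hXω, hYω]

variable [CompleteSpace E]

theorem gradient_const_mul_sum {ι : Type*} {f : ι → E → ℝ} {x : E} (s : Finset ι)
    (hf : ∀ i ∈ s, DifferentiableAt ℝ (f i) x) (c : ℝ) :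
    gradient (fun y => c * ∑ i ∈ s, f i y) x = c • ∑ i ∈ s, gradient (f i) x := by
  refine HasGradientAt.gradient ?_
  rw [hasGradientAt_iff_hasFDerivAt, map_smul, map_sum]
  exact (HasFDerivAt.fun_sum fun i hi => (hf i hi).hasGradientAt.hasFDerivAt).const_mul c

section Moments

variable {Ω : Type*} [MeasurableSpace Ω] {μ : Measure Ω} [IsProbabilityMeasure μ]

theorem integral_norm_add_sq_of_integral_eq_zero {X : Ω → E} (hX : MemLp X 2 μ)
    (h0 : ∫ ω, X ω ∂μ = 0) (c : E) :
    ∫ ω, ‖X ω + c‖ ^ 2 ∂μ = ∫ ω, ‖X ω‖ ^ 2 ∂μ + ‖c‖ ^ 2 := by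
  have hX1 : Integrable X μ := hX.integrable one_le_two
  have hsq : Integrable (fun ω => ‖X ω‖ ^ 2) μ := hX.integrable_norm_pow two_ne_zero
  have hcross : Integrable (fun ω => 2 * ⟪X ω, c⟫) μ := (hX1.inner_const c).const_mul 2
  have hcross0 : ∫ ω, ⟪X ω, c⟫ ∂μ = 0 := by
    simpa [real_inner_comm, h0] using integral_inner (𝕜 := ℝ) hX1 c
  simp_rw [norm_add_sq_real]
  rw [integral_add (f := fun ω => ‖X ω‖ ^ 2 + 2 * ⟪X ω, c⟫) (hsq.add hcross)
      (integrable_const _), integral_add hsq hcross, integral_const_mul, hcross0]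
  simp

theorem integral_norm_sub_integral_sq_le {X : Ω → E} (hX : MemLp X 2 μ) :
    ∫ ω, ‖X ω - ∫ ω', X ω' ∂μ‖ ^ 2 ∂μ ≤ ∫ ω, ‖X ω‖ ^ 2 ∂μ := by
  have hcentered := integral_norm_add_sq_of_integral_eq_zero
    (X := fun ω => X ω - ∫ ω', X ω' ∂μ) (hX.sub (memLp_const _))
    (by simp [integral_sub (hX.integrable one_le_two) (integrable_const _)])
    (∫ ω, X ω ∂μ)
  simp only [sub_add_cancel] at hcentered
  rw [hcentered]
  exact le_add_of_nonneg_right (sq_nonneg _)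

end Moments

theorem integral_uniformOn_univ {κ : Type*} [Fintype κ] [MeasurableSpace κ]
    [MeasurableSingletonClass κ] (F : κ → E) :
    ∫ a, F a ∂uniformOn (Set.univ : Set κ) = (Fintype.card κ : ℝ)⁻¹ • ∑ a, F a := by
  rw [uniformOn, ProbabilityTheory.cond, Measure.restrict_univ, integral_smul_measure,
    integral_count, Measure.count_univ, ENat.card_eq_coe_fintype_card]
  simp

theorem integral_pi_uniformOn_univ {ι κ : Type*} [Fintype ι] [DecidableEq ι] [Fintype κ]
    [MeasurableSpace κ] [MeasurableSingletonClass κ] (F : (ι → κ) → E) :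
    ∫ σ, F σ ∂Measure.pi (fun _ : ι => uniformOn (Set.univ : Set κ))
      = ((Fintype.card κ : ℝ) ^ Fintype.card ι)⁻¹ • ∑ σ, F σ := by
  rw [← uniformOn_pi, Set.pi_univ, integral_uniformOn_univ, Fintype.card_fun, Nat.cast_pow]

section Pi

variable {ι : Type*} [Fintype ι] {Ω : ι → Type*} [∀ i, MeasurableSpace (Ω i)]
  {μ : ∀ i, Measure (Ω i)} [∀ i, IsProbabilityMeasure (μ i)]

theorem integral_inner_comp_eval_of_ne {i j : ι} (hij : i ≠ j) {X : Ω i → E} {Y : Ω j → E}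
    (hX : Integrable X (μ i)) (hY : Integrable Y (μ j)) :
    ∫ ω, ⟪X (ω i), Y (ω j)⟫ ∂Measure.pi μ = ⟪∫ ω, X ω ∂μ i, ∫ ω, Y ω ∂μ j⟫ := by
  have hind : IndepFun (fun ω : ∀ i, Ω i => ω i) (fun ω => ω j) (Measure.pi μ) :=
    (iIndepFun_pi (X := fun _ => id) fun _ => aemeasurable_id).indepFun hij
  have h := hind.integral_bilin_comp_comp (measurable_pi_apply i).aemeasurable
    (measurable_pi_apply j).aemeasurable
    (by rwa [(measurePreserving_eval μ i).map_eq]) (by rwa [(measurePreserving_eval μ j).map_eq])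
    (innerSL ℝ)
  rw [integral_comp_eval hX.aestronglyMeasurable, integral_comp_eval hY.aestronglyMeasurable] at h
  exact h

theorem integral_norm_sum_pi_sq_of_integral_eq_zero {X : ∀ i, Ω i → E}
    (hX : ∀ i, MemLp (X i) 2 (μ i)) (h0 : ∀ i, ∫ ω, X i ω ∂μ i = 0) :
    ∫ ω, ‖∑ i, X i (ω i)‖ ^ 2 ∂Measure.pi μ = ∑ i, ∫ ω, ‖X i ω‖ ^ 2 ∂μ i := by
  classical
  have hXpi (i : ι) : MemLp (fun ω : ∀ i, Ω i => X i (ω i)) 2 (Measure.pi μ) :=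
    (hX i).comp_measurePreserving (measurePreserving_eval μ i)
  have hterm (i j : ι) : ∫ ω, ⟪X i (ω i), X j (ω j)⟫ ∂Measure.pi μ
      = if i = j then ∫ ω, ‖X i ω‖ ^ 2 ∂μ i else 0 := by
    split_ifs with hij
    · subst hij
      simp_rw [real_inner_self_eq_norm_sq]
      exact integral_comp_eval ((hX i).aestronglyMeasurable.norm.pow 2)
    · rw [integral_inner_comp_eval_of_ne hij ((hX i).integrable one_le_two)
        ((hX j).integrable one_le_two), h0, h0, inner_zero_left]
  calc ∫ ω, ‖∑ i, X i (ω i)‖ ^ 2 ∂Measure.pi μ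
      = ∫ ω, ∑ i, ∑ j, ⟪X i (ω i), X j (ω j)⟫ ∂Measure.pi μ := by
        simp_rw [← real_inner_self_eq_norm_sq, sum_inner, inner_sum]
    _ = ∑ i, ∑ j, ∫ ω, ⟪X i (ω i), X j (ω j)⟫ ∂Measure.pi μ := by
        rw [integral_finsetSum _ fun i _ => integrable_finsetSum _ fun j _ =>
          (hXpi i).integrable_inner (hXpi j)]
        exact Finset.sum_congr rfl fun i _ => integral_finsetSum _ fun j _ =>
          (hXpi i).integrable_inner (hXpi j)
    _ = ∑ i, ∫ ω, ‖X i ω‖ ^ 2 ∂μ i := by simp [hterm]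

theorem integral_norm_sum_pi_sub_sq {Y : ∀ i, Ω i → E} {m : ι → E}
    (hY : ∀ i, MemLp (Y i) 2 (μ i)) (hm : ∀ i, ∫ ω, Y i ω ∂μ i = m i) (z : E) :
    ∫ ω, ‖∑ i, Y i (ω i) - z‖ ^ 2 ∂Measure.pi μ
      = ∑ i, ∫ ω, ‖Y i ω - m i‖ ^ 2 ∂μ i + ‖∑ i, m i - z‖ ^ 2 := by
  have hX (i : ι) : MemLp (fun ω => Y i ω - m i) 2 (μ i) := (hY i).sub (memLp_const _)
  have hX0 (i : ι) : ∫ ω, Y i ω - m i ∂μ i = 0 := by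
    simp [hm, integral_sub ((hY i).integrable one_le_two) (integrable_const _)]
  have hXpi (i : ι) : MemLp (fun ω : ∀ i, Ω i => Y i (ω i) - m i) 2 (Measure.pi μ) :=
    (hX i).comp_measurePreserving (measurePreserving_eval μ i)
  have hmean : ∫ ω, ∑ i, (Y i (ω i) - m i) ∂Measure.pi μ = 0 := by
    rw [integral_finsetSum _ fun i _ => (hXpi i).integrable one_le_two]
    exact Finset.sum_eq_zero fun i _ =>
      (integral_comp_eval (hX i).aestronglyMeasurable).trans (hX0 i)
  have hsplit (ω : ∀ i, Ω i) :
      ∑ i, Y i (ω i) - z = ∑ i, (Y i (ω i) - m i) + (∑ i, m i - z) := by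
    rw [Finset.sum_sub_distrib]; abel
  have hsum : MemLp (fun ω : ∀ i, Ω i => ∑ i, (Y i (ω i) - m i)) 2 (Measure.pi μ) :=
    memLp_finsetSum _ fun i _ => hXpi i
  simp_rw [hsplit]
  rw [integral_norm_add_sq_of_integral_eq_zero hsum hmean,
    integral_norm_sum_pi_sq_of_integral_eq_zero hX hX0]

end Pi

section Minibatch

variable {ι κ : Type*} [Fintype ι] [Fintype κ] [MeasurableSpace κ] [MeasurableSingletonClass κ]
  {ν : Measure κ} [IsProbabilityMeasure ν]

theorem integral_sum_comp_eval (g : κ → ℝ) :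
    ∫ σ, ∑ j, g (σ j) ∂Measure.pi (fun _ : ι => ν) = Fintype.card ι * ∫ i, g i ∂ν := by
  have hcoord (j : ι) : ∫ σ, g (σ j) ∂Measure.pi (fun _ : ι => ν) = ∫ i, g i ∂ν :=
    integral_comp_eval (μ := fun _ : ι => ν) (i := j) Integrable.of_finite.aestronglyMeasurable
  simp [integral_finsetSum _ fun _ _ => Integrable.of_finite, hcoord]

theorem integral_norm_sum_comp_eval_sub_sq_le (v : κ → E) :
    ∫ σ, ‖∑ j, v (σ j) - (Fintype.card ι : ℝ) • ∫ i, v i ∂ν‖ ^ 2 ∂Measure.pi (fun _ : ι => ν)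
      ≤ Fintype.card ι * ∫ i, ‖v i‖ ^ 2 ∂ν := by
  have hv : MemLp v 2 ν :=
    (memLp_two_iff_integrable_sq_norm Integrable.of_finite.1).2 Integrable.of_finite
  rw [integral_norm_sum_pi_sub_sq (Y := fun _ : ι => v) (fun _ => hv) (fun _ => rfl),
    Finset.sum_const, Finset.sum_const, Finset.card_univ, nsmul_eq_mul,
    ← Nat.cast_smul_eq_nsmul ℝ, sub_self, norm_zero]
  simpa using mul_le_mul_of_nonneg_left (integral_norm_sub_integral_sq_le hv)
    (Nat.cast_nonneg (Fintype.card ι))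

theorem integral_integral_norm_sum_sub_sq_le {Ω : ι → Type*} [∀ j, MeasurableSpace (Ω j)]
    {μ : ∀ j, Measure (Ω j)} [∀ j, IsProbabilityMeasure (μ j)] {C : ∀ j, E → Ω j → E} {w : ℝ}
    (hC : ∀ j y, MemLp (C j y) 2 (μ j)) (hCmean : ∀ j y, ∫ ω, C j y ω ∂μ j = y)
    (hCvar : ∀ j y, ∫ ω, ‖C j y ω - y‖ ^ 2 ∂μ j ≤ w * ‖y‖ ^ 2) (v : κ → E) :
    ∫ σ, ∫ ω, ‖∑ j, C j (v (σ j)) (ω j) - (Fintype.card ι : ℝ) • ∫ i, v i ∂ν‖ ^ 2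
        ∂Measure.pi μ ∂Measure.pi (fun _ : ι => ν)
      ≤ Fintype.card ι * (1 + w) * ∫ i, ‖v i‖ ^ 2 ∂ν := by
  have hcompress (σ : ι → κ) :
      ∫ ω, ‖∑ j, C j (v (σ j)) (ω j) - (Fintype.card ι : ℝ) • ∫ i, v i ∂ν‖ ^ 2 ∂Measure.pi μ
        ≤ w * ∑ j, ‖v (σ j)‖ ^ 2 + ‖∑ j, v (σ j) - (Fintype.card ι : ℝ) • ∫ i, v i ∂ν‖ ^ 2 := by
    rw [integral_norm_sum_pi_sub_sq (fun j => hC j _) fun j => hCmean j _, Finset.mul_sum]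
    gcongr with j
    exact hCvar j _
  calc _ ≤ ∫ σ, w * ∑ j, ‖v (σ j)‖ ^ 2
          + ‖∑ j, v (σ j) - (Fintype.card ι : ℝ) • ∫ i, v i ∂ν‖ ^ 2 ∂Measure.pi (fun _ => ν) :=
        integral_mono Integrable.of_finite Integrable.of_finite hcompress
    _ ≤ w * (Fintype.card ι * ∫ i, ‖v i‖ ^ 2 ∂ν) + Fintype.card ι * ∫ i, ‖v i‖ ^ 2 ∂ν := by
        rw [integral_add Integrable.of_finite Integrable.of_finite, integral_const_mul,
          integral_sum_comp_eval fun i => ‖v i‖ ^ 2]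
        gcongr
        exact integral_norm_sum_comp_eval_sub_sq_le v
    _ = Fintype.card ι * (1 + w) * ∫ i, ‖v i‖ ^ 2 ∂ν := by ring

end Minibatch

end

theorem minibatch_compressed_estimator_variance_general {d N S : ℕ} (hN : 0 < N) (hS : 0 < S)
    {Ω : Fin S → Type*} [∀ j, MeasurableSpace (Ω j)]
    (μ : ∀ j, Measure (Ω j)) [∀ j, IsProbabilityMeasure (μ j)]
    (w : ℝ)
    (C : ∀ j : Fin S, EuclideanSpace ℝ (Fin d) → Ω j → EuclideanSpace ℝ (Fin d))
    (hCmean : ∀ j y, ∫ ω, C j y ω ∂(μ j) = y)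
    (hCvar : ∀ j y, ∫ ω, ‖C j y ω - y‖ ^ 2 ∂(μ j) ≤ w * ‖y‖ ^ 2)
    (hCint : ∀ j y, Integrable (C j y) (μ j))
    (hCint2 : ∀ j y, Integrable (fun ω => ‖C j y ω‖ ^ 2) (μ j))
    (f : Fin N → EuclideanSpace ℝ (Fin d) → ℝ)
    (hdiff : ∀ i, Differentiable ℝ (f i))
    (hvec : Fin N → EuclideanSpace ℝ (Fin d))
    (x : EuclideanSpace ℝ (Fin d)) :
    ((N : ℝ) ^ S)⁻¹ * ∑ idx : Fin S → Fin N,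
        (∫ ω : (∀ j, Ω j),
          ‖(S : ℝ)⁻¹ • ∑ j : Fin S, C j (gradient (f (idx j)) x - hvec (idx j)) (ω j)
              + (N : ℝ)⁻¹ • ∑ i : Fin N, hvec i
              - gradient (fun y => (N : ℝ)⁻¹ * ∑ k : Fin N, f k y) x‖ ^ 2
          ∂(Measure.pi μ))
      ≤ ((1 + w) / S) * ((N : ℝ)⁻¹ * ∑ i : Fin N, ‖gradient (f i) x - hvec i‖ ^ 2) := by
  classical
  have : Nonempty (Fin N) := Fin.pos_iff_nonempty.mp hN
  have hNr : (N : ℝ) ≠ 0 := Nat.cast_ne_zero.mpr hN.ne'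
  have hSr : (S : ℝ) ≠ 0 := Nat.cast_ne_zero.mpr hS.ne'
  set a : Fin N → EuclideanSpace ℝ (Fin d) := fun i => gradient (f i) x - hvec i
  set ν : Measure (Fin N) := uniformOn Set.univ
  have hgrad : gradient (fun y => (N : ℝ)⁻¹ * ∑ k, f k y) x
      = ∫ i, a i ∂ν + (N : ℝ)⁻¹ • ∑ i, hvec i := by
    rw [gradient_const_mul_sum _ fun i _ => (hdiff i).differentiableAt, integral_uniformOn_univ,
      Fintype.card_fin, ← smul_add, ← Finset.sum_add_distrib]
    simp [a]
  have hintegrand (idx : Fin S → Fin N) (ω : ∀ j, Ω j) :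
      ‖(S : ℝ)⁻¹ • ∑ j, C j (gradient (f (idx j)) x - hvec (idx j)) (ω j)
          + (N : ℝ)⁻¹ • ∑ i, hvec i
          - gradient (fun y => (N : ℝ)⁻¹ * ∑ k, f k y) x‖ ^ 2
        = (S : ℝ)⁻¹ ^ 2 * ‖∑ j, C j (a (idx j)) (ω j) - (S : ℝ) • ∫ i, a i ∂ν‖ ^ 2 := by
    have hfactor : (S : ℝ)⁻¹ • ∑ j, C j (a (idx j)) (ω j) - ∫ i, a i ∂ν
        = (S : ℝ)⁻¹ • (∑ j, C j (a (idx j)) (ω j) - (S : ℝ) • ∫ i, a i ∂ν) := by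
      rw [smul_sub, inv_smul_smul₀ hSr]
    rw [hgrad, add_sub_add_right_eq_sub, hfactor, norm_smul, mul_pow, Real.norm_eq_abs, sq_abs]
  have hC (j : Fin S) (y) : MemLp (C j y) 2 (μ j) :=
    (memLp_two_iff_integrable_sq_norm (hCint j y).1).2 (hCint2 j y)
  calc _ = (S : ℝ)⁻¹ ^ 2 * ∫ idx, ∫ ω, ‖∑ j, C j (a (idx j)) (ω j) - (S : ℝ) • ∫ i, a i ∂ν‖ ^ 2
          ∂Measure.pi μ ∂Measure.pi (fun _ : Fin S => ν) := by
        simp_rw [hintegrand, integral_const_mul, ν, integral_pi_uniformOn_univ, ← Finset.mul_sum]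
        simp only [Fintype.card_fin, smul_eq_mul]
        ring
    _ ≤ (S : ℝ)⁻¹ ^ 2 * (S * (1 + w) * ∫ i, ‖a i‖ ^ 2 ∂ν) := by
        gcongr
        simpa using integral_integral_norm_sum_sub_sq_le hC hCmean hCvar a
    _ = _ := by
        rw [integral_uniformOn_univ, Fintype.card_fin, smul_eq_mul]
        field_simp
        rfl

theorem minibatch_compressed_estimator_variance {d N S : ℕ} (hN : 0 < N) (hS : 0 < S)
    {Ω : Fin S → Type*} [∀ j, MeasurableSpace (Ω j)]
    (μ : ∀ j, Measure (Ω j)) [∀ j, IsProbabilityMeasure (μ j)]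
    (w : ℝ) (hw : 0 ≤ w)
    (C : ∀ j : Fin S, EuclideanSpace ℝ (Fin d) → Ω j → EuclideanSpace ℝ (Fin d))
    (hCmean : ∀ j y, ∫ ω, C j y ω ∂(μ j) = y)
    (hCvar : ∀ j y, ∫ ω, ‖C j y ω - y‖ ^ 2 ∂(μ j) ≤ w * ‖y‖ ^ 2)
    (hCint : ∀ j y, Integrable (C j y) (μ j))
    (hCint2 : ∀ j y, Integrable (fun ω => ‖C j y ω‖ ^ 2) (μ j))
    (f : Fin N → EuclideanSpace ℝ (Fin d) → ℝ)
    (hdiff : ∀ i, Differentiable ℝ (f i))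
    (hvec : Fin N → EuclideanSpace ℝ (Fin d))
    (x : EuclideanSpace ℝ (Fin d)) :
    ((N : ℝ) ^ S)⁻¹ * ∑ idx : Fin S → Fin N,
        (∫ ω : (∀ j, Ω j),
          ‖(S : ℝ)⁻¹ • ∑ j : Fin S, C j (gradient (f (idx j)) x - hvec (idx j)) (ω j)
              + (N : ℝ)⁻¹ • ∑ i : Fin N, hvec i
              - gradient (fun y => (N : ℝ)⁻¹ * ∑ k : Fin N, f k y) x‖ ^ 2
          ∂(Measure.pi μ))
      ≤ ((1 + w) / S) * ((N : ℝ)⁻¹ * ∑ i : Fin N, ‖gradient (f i) x - hvec i‖ ^ 2) :=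
  minibatch_compressed_estimator_variance_general hN hS μ w C hCmean hCvar hCint hCint2 f hdiff hvec
    x
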